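/- (Backward direction of the NP-hardness reduction for Unconstrained 1-near Editing.) If there exists an edit set F ⊆ S_Φ × Q_Φ with |F| ≤ t_Φ = |C|(3|V|−1) such that the edited graph (S_Φ ∪ Q_Φ, E_Φ △ F) admits a nested ordering π of the students with |π(s) − π_Φ(s)| ≤ 1 for every student s, then the 3-CNF formula Φ is satisfiable; in fact, setting each variable v_i true if and only if π(sᵢᵗ) > π(sᵢᶠ) yields a satisfying assignment. -/

import Mathlib

open Finset

/-- The neighborhood of a student `s` in the bipartite graph with edge set `E`. -/
noncomputable def nbhd {S Q : Type*} [Fintype Q] [DecidableEq S] [DecidableEq Q]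
    (E : Finset (S × Q)) (s : S) : Finset Q :=
  Finset.univ.filter fun q => (s, q) ∈ E

/-- The students of the reduction: six students per variable, with roles encoded as
`0 = a`, `1 = b`, `2 = f`, `3 = t`, `4 = c`, `5 = d` (smaller role index = stronger). -/
abbrev Stud (n : ℕ) := Fin n × Fin 6

/-- `s` is strictly stronger than `p` (in the linear ordering `π_Φ`, read from strongest to
weakest): earlier variable, or same variable and stronger role. -/
abbrev Stronger {n : ℕ} (s p : Stud n) : Prop :=
  s.1 < p.1 ∨ (s.1 = p.1 ∧ s.2 < p.2)

/-- `s >_P p` in the partial order `P`: all cross-variable pairs, and within a variable all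
pairs from `a > b > f, b > t, f > c, t > c, c > d` except the incomparable pair `{f, t}`. -/
abbrev Pgt {n : ℕ} (s p : Stud n) : Prop :=
  s.1 < p.1 ∨ (s.1 = p.1 ∧ s.2 < p.2 ∧ ¬((s.2 : ℕ) = 2 ∧ (p.2 : ℕ) = 3))

/-- The questions of the reduction: for each relation `s >_P s'` of `P` there are
`t_Φ + 1` gadget questions (where `t_Φ = m * (3n − 1)`), and for each clause there is one
clause question. -/
abbrev Ques (n m : ℕ) :=
  ({pp : Stud n × Stud n // Pgt pp.1 pp.2} × Fin (m * (3 * n - 1) + 1)) ⊕ Fin m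

/-- Adjacency of the reduction graph `G_Φ`. A gadget question for a relation `s >_P s'` is
adjacent exactly to `s` and to every student strictly stronger than `s` (in particular it is
not adjacent to `s'`). A clause question `q_{c_l}` is adjacent to `sᵢᵗ` if `vᵢ` occurs
positively in `c_l`, to `sᵢᶠ` if `vᵢ` occurs negatively, to `sᵢᶜ` if `vᵢ` does not occur,
and to `sᵢᵇ` and `sᵢᵈ` for every `i`. -/
def adjPhi {n m : ℕ} (clause : Fin m → Fin n → Option Bool)
    (s : Stud n) (q : Ques n m) : Prop :=
  match q with
  | Sum.inl (⟨(p, _), _⟩, _) => s = p ∨ Stronger s p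
  | Sum.inr l =>
      ((s.2 : ℕ) = 3 ∧ clause l s.1 = some true) ∨
      ((s.2 : ℕ) = 2 ∧ clause l s.1 = some false) ∨
      ((s.2 : ℕ) = 4 ∧ clause l s.1 = none) ∨
      (s.2 : ℕ) = 1 ∨ (s.2 : ℕ) = 5

open scoped Classical in
/-- The edge set of the reduction graph `G_Φ`. -/
noncomputable def EPhi {n m : ℕ} (clause : Fin m → Fin n → Option Bool) :
    Finset (Stud n × Ques n m) :=
  Finset.univ.filter fun e => adjPhi clause e.1 e.2

/-!
The `t_Φ + 1` copies of each gadget question cannot all be edited, so every nested ordering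
of the edited graph extends `P`. The edited neighbourhood of a clause question is then an
up-set of `π`; inside each variable block it differs from the original one in at least two
students, and in exactly two only if it contains `sᵢᵃ` but not `sᵢᵈ` and the variable
satisfies the clause under the assignment read off `π`. Such a block puts all earlier blocks
wholly into the up-set, so at most one block is that cheap. Hence every clause question
needs `3|V| − 1` edits, and that of an unsatisfied clause `3|V|`, exceeding the budget `t_Φ`.
-/

section Nested

variable {S Q α : Type*} [Fintype Q] [DecidableEq S] [DecidableEq Q] [LinearOrder α]

def IsNested (π : S → α) (E : Finset (S × Q)) : Prop :=
  ∀ s₁ s₂, π s₂ ≤ π s₁ → nbhd E s₂ ⊆ nbhd E s₁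

@[simp]
lemma mem_nbhd {E : Finset (S × Q)} {s : S} {q : Q} : q ∈ nbhd E s ↔ (s, q) ∈ E := by
  simp [nbhd]

lemma IsNested.mem_of_le {π : S → α} {E : Finset (S × Q)} (hE : IsNested π E) {s s' : S}
    {q : Q} (hle : π s' ≤ π s) (hs' : (s', q) ∈ E) : (s, q) ∈ E :=
  mem_nbhd.1 (hE s s' hle (mem_nbhd.2 hs'))

lemma IsNested.lt_of_card_lt {π : S → α} {E F : Finset (S × Q)}
    (hE : IsNested π (symmDiff E F)) {s p : S} {T : Finset Q}
    (hT : ∀ q ∈ T, (s, q) ∈ E ∧ (p, q) ∉ E) (hF : #F < #T) : π p < π s := by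
  obtain ⟨q, hqT, hqF⟩ := exists_mem_notMem_of_card_lt_card (hF.trans_le' card_image_le)
  have hfree : ∀ x, (x, q) ∉ F := fun x hx => hqF (mem_image_of_mem Prod.snd hx)
  by_contra! hle
  have hp := hE.mem_of_le hle (mem_symmDiff.2 (Or.inl ⟨(hT q hqT).1, hfree s⟩))
  rcases mem_symmDiff.1 hp with ⟨hpE, -⟩ | ⟨hpF, -⟩
  exacts [(hT q hqT).2 hpE, hfree p hpF]

end Nested

lemma card_filter_prod {β γ : Type*} [Fintype β] [Fintype γ] (P : β × γ → Prop)
    [DecidablePred P] : #{x | P x} = ∑ b, #{c | P (b, c)} := by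
  simp only [card_filter, Fintype.sum_prod_type]

lemma sum_card_edits_le {S Q Q' : Type*} [Fintype S] [Fintype Q'] [DecidableEq S]
    [DecidableEq Q] (F : Finset (S × Q)) (ι : Q' ↪ Q) :
    ∑ q', #{s | (s, ι q') ∈ F} ≤ #F := by
  rw [← card_filter_prod (fun x : Q' × S => (x.2, ι x.1) ∈ F)]
  refine card_le_card_of_injOn (fun x => (x.2, ι x.1)) (fun x hx => by simpa using hx) ?_
  rintro ⟨a, b⟩ - ⟨c, d⟩ - h
  simp only [Prod.mk.injEq, ι.injective.eq_iff] at h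
  rw [h.1, h.2]

lemma three_mul_sub_one_le_sum {n : ℕ} (g : Fin n → ℕ) (h2 : ∀ i, 2 ≤ g i)
    (h3 : ∀ i j, i ≠ j → 3 ≤ g i ∨ 3 ≤ g j) : 3 * n - 1 ≤ ∑ i, g i := by
  by_cases hall : ∀ i, 3 ≤ g i
  · have : n * 3 ≤ ∑ i, g i := by simpa using card_nsmul_le_sum univ g 3 fun i _ => hall i
    omega
  · obtain ⟨i₀, hi₀⟩ := not_forall.1 hall
    have hrest : ∀ j ∈ univ.erase i₀, 3 ≤ g j := fun j hj =>
      (h3 j i₀ (ne_of_mem_erase hj)).resolve_right hi₀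
    have : (n - 1) * 3 ≤ ∑ j ∈ univ.erase i₀, g j := by
      simpa using card_nsmul_le_sum _ g 3 hrest
    rw [← add_sum_erase _ g (mem_univ i₀)]
    have := h2 i₀
    omega

/-- Adjacency of a clause question within a variable block, where `c` is the occurrence of
the block's variable in the clause (`none` if it does not occur). -/
abbrev clauseRole (c : Option Bool) (r : Fin 6) : Prop :=
  ((r : ℕ) = 3 ∧ c = some true) ∨ ((r : ℕ) = 2 ∧ c = some false) ∨
    ((r : ℕ) = 4 ∧ c = none) ∨ (r : ℕ) = 1 ∨ (r : ℕ) = 5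

/-- `g` is an up-set of the block `a > b > f, t > c > d`, where `b` orients the pair `{f, t}`
(`t` above `f` iff `b`). -/
def BlockUpClosed (b : Bool) (g : Fin 6 → Bool) : Prop :=
  (g 1 → g 0) ∧ (g 2 → g 1) ∧ (g 3 → g 1) ∧ (g 4 → g 2) ∧ (g 4 → g 3) ∧ (g 5 → g 4) ∧
    (b → g 2 → g 3) ∧ (b = false → g 3 → g 2)

def blockEdits (c : Option Bool) (g : Fin 6 → Bool) : ℕ :=
  #{r | g r ≠ decide (clauseRole c r)}

lemma blockEdits_bounds (c : Option Bool) (b : Bool) (g : Fin 6 → Bool)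
    (hg : BlockUpClosed b g) :
    2 ≤ blockEdits c g ∧ (blockEdits c g ≤ 2 → g 0 ∧ c = some b) ∧
      (g 5 → 3 ≤ blockEdits c g) := by
  revert c b g
  unfold BlockUpClosed blockEdits
  decide

noncomputable def editedColumn {n m : ℕ} (clause : Fin m → Fin n → Option Bool)
    (F : Finset (Stud n × Ques n m)) (l : Fin m) (i : Fin n) (r : Fin 6) : Bool :=
  decide (((i, r), (Sum.inr l : Ques n m)) ∈ symmDiff (EPhi clause) F)

section Reduction

variable {n m : ℕ} {clause : Fin m → Fin n → Option Bool} {α : Type*} [LinearOrder α]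

lemma mem_EPhi {s : Stud n} {q : Ques n m} : (s, q) ∈ EPhi clause ↔ adjPhi clause s q := by
  simp [EPhi]

lemma mem_EPhi_inr {l : Fin m} {s : Stud n} :
    (s, (Sum.inr l : Ques n m)) ∈ EPhi clause ↔ clauseRole (clause l s.1) s.2 :=
  mem_EPhi

lemma stronger_of_pgt {s p : Stud n} (h : Pgt s p) : Stronger s p :=
  h.imp_right fun h => ⟨h.1, h.2.1⟩

lemma not_stronger_of_stronger {s p : Stud n} (h : Stronger s p) : ¬(p = s ∨ Stronger p s) := by
  obtain ⟨i, r⟩ := s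
  obtain ⟨j, r'⟩ := p
  simp only [Stronger, Prod.mk.injEq, Fin.lt_def, Fin.ext_iff] at *
  omega

lemma lt_of_pgt {F : Finset (Stud n × Ques n m)} (hF : #F ≤ m * (3 * n - 1))
    {π : Stud n → α} (hG : IsNested π (symmDiff (EPhi clause) F))
    {s p : Stud n} (h : Pgt s p) : π p < π s := by
  refine hG.lt_of_card_lt (T := univ.map ⟨fun j => Sum.inl (⟨(s, p), h⟩, j), ?_⟩) ?_ ?_
  · intro j j' hj
    simpa using hj
  · simp only [mem_map, mem_univ, true_and, forall_exists_index]
    rintro q j rfl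
    rw [mem_EPhi, mem_EPhi]
    exact ⟨Or.inl rfl, not_stronger_of_stronger (stronger_of_pgt h)⟩
  · simpa using Nat.lt_succ_of_le hF

section ClauseQuestion

variable {F : Finset (Stud n × Ques n m)} {π : Stud n → α}
  (hP : ∀ s p : Stud n, Pgt s p → π p < π s) (hG : IsNested π (symmDiff (EPhi clause) F))
  (l : Fin m)

lemma card_clause_edits_eq_sum :
    #{s | (s, (Sum.inr l : Ques n m)) ∈ F} =
      ∑ i, blockEdits (clause l i) (editedColumn clause F l i) := by
  rw [card_filter_prod]
  refine sum_congr rfl fun i _ => congrArg card (filter_congr fun r _ => ?_)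
  simp only [editedColumn, mem_symmDiff, mem_EPhi_inr, ne_eq, decide_eq_decide]
  tauto

include hP hG in
lemma blockUpClosed_editedColumn (i : Fin n) :
    BlockUpClosed (decide (π (i, 2) < π (i, 3))) (editedColumn clause F l i) := by
  have up : ∀ r r' : Fin 6, π (i, r') ≤ π (i, r) →
      editedColumn clause F l i r' → editedColumn clause F l i r := by
    simp only [editedColumn, decide_eq_true_eq]
    exact fun r r' hle => hG.mem_of_le hle
  have down : ∀ r r' : Fin 6, r < r' → ¬((r : ℕ) = 2 ∧ (r' : ℕ) = 3) →
      editedColumn clause F l i r' → editedColumn clause F l i r :=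
    fun r r' hlt hft => up r r' (hP (i, r) (i, r') (Or.inr ⟨rfl, hlt, hft⟩)).le
  refine ⟨down 0 1 (by decide) (by decide), down 1 2 (by decide) (by decide),
    down 1 3 (by decide) (by decide), down 2 4 (by decide) (by decide),
    down 3 4 (by decide) (by decide), down 4 5 (by decide) (by decide), fun hb => ?_,
    fun hb => ?_⟩
  · exact up 3 2 (of_decide_eq_true hb).le
  · exact up 2 3 (not_lt.1 (of_decide_eq_false hb))

include hP hG in
lemma three_mul_sub_one_le_card_clause_edits :
    3 * n - 1 ≤ #{s | (s, (Sum.inr l : Ques n m)) ∈ F} := by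
  have hblock := fun i => blockEdits_bounds (clause l i) _ _ (blockUpClosed_editedColumn hP hG l i)
  have earlier_expensive : ∀ i j, i < j →
      blockEdits (clause l j) (editedColumn clause F l j) ≤ 2 →
        3 ≤ blockEdits (clause l i) (editedColumn clause F l i) := by
    intro i j hij hj
    refine (hblock i).2.2 ?_
    have ha := (hblock j).2.1 hj |>.1
    simp only [editedColumn, decide_eq_true_eq] at ha ⊢
    exact hG.mem_of_le (hP _ _ (Or.inl hij)).le ha
  rw [card_clause_edits_eq_sum]
  refine three_mul_sub_one_le_sum _ (fun i => (hblock i).1) fun i j hij => ?_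
  rcases hij.lt_or_gt with h | h
  · exact or_iff_not_imp_right.2 fun hj => earlier_expensive i j h (by omega)
  · exact or_iff_not_imp_left.2 fun hi => earlier_expensive j i h (by omega)

include hP hG in
lemma three_mul_le_card_clause_edits
    (hunsat : ∀ i, clause l i ≠ some (decide (π (i, 2) < π (i, 3)))) :
    3 * n ≤ #{s | (s, (Sum.inr l : Ques n m)) ∈ F} := by
  have hblock : ∀ i, 3 ≤ blockEdits (clause l i) (editedColumn clause F l i) := fun i => by
    by_contra! h
    exact hunsat i
      ((blockEdits_bounds _ _ _ (blockUpClosed_editedColumn hP hG l i)).2.1 (by omega)).2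
  rw [card_clause_edits_eq_sum, mul_comm]
  simpa using card_nsmul_le_sum univ _ 3 fun i _ => hblock i

end ClauseQuestion

end Reduction

theorem stmt13_general (n m : ℕ) (clause : Fin m → Fin n → Option Bool)
    (h3 : ∀ l : Fin m, (Finset.univ.filter fun i => clause l i ≠ none).card = 3)
    (F : Finset (Stud n × Ques n m))
    (hF : F.card ≤ m * (3 * n - 1))
    (π : Stud n ≃ Fin (Fintype.card (Stud n)))
    (hnested : ∀ s₁ s₂ : Stud n, π s₂ ≤ π s₁ →
      nbhd (symmDiff (EPhi clause) F) s₂ ⊆ nbhd (symmDiff (EPhi clause) F) s₁) :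
    ∀ l : Fin m, ∃ i : Fin n,
      clause l i = some (decide (π (i, (2 : Fin 6)) < π (i, (3 : Fin 6)))) := by
  intro l
  by_contra! hunsat
  have hn : 0 < n := by
    have := (h3 l).symm.trans_le (card_filter_le _ _)
    simp only [card_univ, Fintype.card_fin] at this
    omega
  have hG : IsNested π (symmDiff (EPhi clause) F) := hnested
  have hP : ∀ s p, Pgt s p → π p < π s := fun s p => lt_of_pgt hF hG
  have hlt : ∑ _l : Fin m, (3 * n - 1) < ∑ l, #{s | (s, (Sum.inr l : Ques n m)) ∈ F} :=
    sum_lt_sum (fun l _ => three_mul_sub_one_le_card_clause_edits hP hG l)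
      ⟨l, mem_univ l, by have := three_mul_le_card_clause_edits hP hG l hunsat; omega⟩
  have hsum : ∑ l, #{s | (s, (Sum.inr l : Ques n m)) ∈ F} ≤ #F :=
    sum_card_edits_le F Function.Embedding.inr
  simp only [sum_const, card_univ, Fintype.card_fin, smul_eq_mul] at hlt
  omega

/-- Backward direction of the NP-hardness reduction for Unconstrained 1-near Editing: if
there is an edit set of at most `t_Φ = |C|(3|V|−1)` edges after which the graph admits a
nested student ordering `π` that is 1-near to `π_Φ`, then `Φ` is satisfiable; in fact,
setting each variable `vᵢ` true iff `π(sᵢᵗ) > π(sᵢᶠ)` yields a satisfying assignment. -/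
theorem stmt13 (n m : ℕ) (clause : Fin m → Fin n → Option Bool)
    (h3 : ∀ l : Fin m, (Finset.univ.filter fun i => clause l i ≠ none).card = 3)
    (πΦ : Stud n ≃ Fin (Fintype.card (Stud n)))
    (hπΦ : ∀ p p' : Stud n, πΦ p < πΦ p' ↔ Stronger p' p)
    (F : Finset (Stud n × Ques n m))
    (hF : F.card ≤ m * (3 * n - 1))
    (π : Stud n ≃ Fin (Fintype.card (Stud n)))
    (hnear : ∀ s : Stud n, ((π s : ℤ) - (πΦ s : ℤ)).natAbs ≤ 1)
    (hnested : ∀ s₁ s₂ : Stud n, π s₂ ≤ π s₁ →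
      nbhd (symmDiff (EPhi clause) F) s₂ ⊆ nbhd (symmDiff (EPhi clause) F) s₁) :
    ∀ l : Fin m, ∃ i : Fin n,
      clause l i = some (decide (π (i, (2 : Fin 6)) < π (i, (3 : Fin 6)))) :=
  stmt13_general n m clause h3 F hF π hnested
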